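/- arXiv:1402.1854 — 3 statements merged into one kernel-verified Lean document; each statement's English description precedes it below -/
import Mathlib

section
/- For b a complex number with Re(b) > 0, the Fourier transform of the function h_b(t) = e^{-2πt} t^{b-1} for t > 0 and h_b(t) = 0 for t ≤ 0, namely ĥ_b(u) = ∫_{ℝ} h_b(t) e^{-2πitu} dt, equals (2π(1+iu))^{-b} Γ(b). -/
/-!
For real `a > 0`, `∫₀^∞ t^(b-1) e^(-a t) dt = a^(-b) Γ(b)` is the substitution `t ↦ t / a` in
Euler's integral. Both sides are holomorphic in `a` on the right half-plane (differentiating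
under the integral sign only turns `b` into `b + 1`), so the identity theorem extends the formula
to all `a` with `Re a > 0`; the Fourier transform of `h_b` is the case `a = 2π(1 + iu)`.
-/

open Complex MeasureTheory Real

open Set Filter Topology

lemma Complex.tendsto_ofReal_nhdsNE (x : ℝ) : Tendsto ((↑) : ℝ → ℂ) (𝓝[≠] x) (𝓝[≠] (x : ℂ)) :=
  tendsto_nhdsWithin_iff.mpr
    ⟨tendsto_nhdsWithin_of_tendsto_nhds continuous_ofReal.continuousAt,
      eventually_nhdsWithin_of_forall fun _ ht => ofReal_injective.ne ht⟩

lemma integrableOn_rpow_mul_exp_neg_mul {s c : ℝ} (hs : -1 < s) (hc : 0 < c) :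
    IntegrableOn (fun t : ℝ => t ^ s * Real.exp (-c * t)) (Ioi 0) := by
  simpa using integrableOn_rpow_mul_exp_neg_mul_rpow hs one_pos hc

lemma norm_cpow_mul_cexp_neg_mul {t : ℝ} (ht : 0 < t) (b a : ℂ) :
    ‖(t : ℂ) ^ (b - 1) * cexp (-(a * t))‖ = t ^ (b.re - 1) * Real.exp (-a.re * t) := by
  rw [norm_mul, norm_cpow_eq_rpow_re_of_pos ht, Complex.norm_exp]
  simp

lemma integrableOn_cpow_mul_cexp_neg_mul {b a : ℂ} (hb : 0 < b.re) (ha : 0 < a.re) :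
    IntegrableOn (fun t : ℝ => (t : ℂ) ^ (b - 1) * cexp (-(a * t))) (Ioi 0) := by
  refine (integrableOn_rpow_mul_exp_neg_mul (s := b.re - 1) (by linarith) ha).mono'
    (by fun_prop : Measurable _).aestronglyMeasurable ?_
  filter_upwards [ae_restrict_mem measurableSet_Ioi] with t ht
  exact (norm_cpow_mul_cexp_neg_mul ht b a).le

lemma hasDerivAt_cpow_mul_cexp_neg_mul {t : ℝ} (ht : 0 < t) (b a : ℂ) :
    HasDerivAt (fun x : ℂ => (t : ℂ) ^ (b - 1) * cexp (-(x * t)))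
      (-((t : ℂ) ^ (b + 1 - 1) * cexp (-(a * t)))) a := by
  have ht' : (t : ℂ) ≠ 0 := ofReal_ne_zero.mpr ht.ne'
  refine ((hasDerivAt_mul_const (t : ℂ)).neg.cexp.const_mul ((t : ℂ) ^ (b - 1))).congr_deriv ?_
  rw [add_sub_right_comm, cpow_add _ _ ht', cpow_one, Pi.neg_apply]
  ring

lemma differentiableOn_integral_cpow_mul_cexp_neg_mul {b : ℂ} (hb : 0 < b.re) :
    DifferentiableOn ℂ (fun a : ℂ => ∫ t in Ioi (0 : ℝ), (t : ℂ) ^ (b - 1) * cexp (-(a * t)))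
      {a | 0 < a.re} := by
  intro a₀ (ha₀ : 0 < a₀.re)
  have hε : 0 < a₀.re / 2 := by positivity
  have hre {x : ℂ} (hx : x ∈ Metric.ball a₀ (a₀.re / 2)) : a₀.re / 2 ≤ x.re := by
    have := (abs_re_le_norm (x - a₀)).trans (mem_ball_iff_norm.mp hx).le
    rw [sub_re, abs_le] at this
    linarith
  have hb' : 0 < (b + 1).re := by simp only [add_re, one_re]; linarith
  refine DifferentiableAt.differentiableWithinAt <| HasDerivAt.differentiableAt <| And.right <|
    hasDerivAt_integral_of_dominated_loc_of_deriv_le (μ := volume.restrict (Ioi 0))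
    (F := fun x t => (t : ℂ) ^ (b - 1) * cexp (-(x * t)))
    (F' := fun x t => -((t : ℂ) ^ (b + 1 - 1) * cexp (-(x * t))))
    (bound := fun t : ℝ => t ^ ((b + 1).re - 1) * Real.exp (-(a₀.re / 2) * t))
    (Metric.ball_mem_nhds a₀ hε) ?_ (integrableOn_cpow_mul_cexp_neg_mul hb ha₀)
    (integrableOn_cpow_mul_cexp_neg_mul hb' ha₀).neg.aestronglyMeasurable ?_
    (integrableOn_rpow_mul_exp_neg_mul (by linarith) hε) ?_
  · filter_upwards [(isOpen_lt continuous_const continuous_re).mem_nhds ha₀] with x hx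
    exact (integrableOn_cpow_mul_cexp_neg_mul hb hx).aestronglyMeasurable
  · filter_upwards [ae_restrict_mem measurableSet_Ioi] with t (ht : 0 < t) x hx
    rw [norm_neg, norm_cpow_mul_cexp_neg_mul ht]
    gcongr
    nlinarith [hre hx]
  · filter_upwards [ae_restrict_mem measurableSet_Ioi] with t ht x _
    exact hasDerivAt_cpow_mul_cexp_neg_mul ht b x

theorem integral_cpow_mul_cexp_neg_mul_Ioi {b a : ℂ} (hb : 0 < b.re) (ha : 0 < a.re) :
    ∫ t in Ioi (0 : ℝ), (t : ℂ) ^ (b - 1) * cexp (-(a * t)) = a ^ (-b) * Gamma b := by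
  have hU : IsOpen {a : ℂ | 0 < a.re} := isOpen_lt continuous_const continuous_re
  have hrhs : DifferentiableOn ℂ (fun a : ℂ => a ^ (-b) * Gamma b) {a | 0 < a.re} :=
    fun a ha => ((differentiableAt_id.cpow_const (Or.inl ha)).mul_const _).differentiableWithinAt
  have hreal : ∀ᶠ r : ℝ in 𝓝[≠] 1,
      ∫ t in Ioi (0 : ℝ), (t : ℂ) ^ (b - 1) * cexp (-((r : ℂ) * t)) = (r : ℂ) ^ (-b) * Gamma b := by
    filter_upwards [nhdsWithin_le_nhds (eventually_gt_nhds one_pos)] with r hr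
    rw [integral_cpow_mul_exp_neg_mul_Ioi hb hr, one_div, inv_cpow_ofReal_nonneg hr.le, cpow_neg]
  exact ((differentiableOn_integral_cpow_mul_cexp_neg_mul hb).analyticOnNhd hU)
    |>.eqOn_of_preconnected_of_frequently_eq (hrhs.analyticOnNhd hU)
      (convex_halfSpace_re_gt 0).isPreconnected (z₀ := 1) (by simp)
      ((tendsto_ofReal_nhdsNE 1).frequently hreal.frequently) ha

/-- Equation (2.9): the Fourier transform of `h_b(t) = e^{-2πt} t^{b-1}` (for `t > 0`,
zero otherwise) is `ĥ_b(u) = (2π(1+iu))^{-b} Γ(b)`, for `Re b > 0`. -/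
theorem fourier_transform_hb (b : ℂ) (hb : 0 < b.re) (u : ℝ) :
    ∫ t in Set.Ioi (0 : ℝ),
        (Real.exp (-2 * π * t) : ℂ) * (t : ℂ) ^ (b - 1) *
          Complex.exp (-2 * π * I * t * u)
      = (2 * π * (1 + I * u)) ^ (-b) * Complex.Gamma b := by
  have ha : 0 < (2 * π * (1 + I * u) : ℂ).re := by simp [pi_pos]
  rw [← integral_cpow_mul_cexp_neg_mul_Ioi hb ha]
  refine setIntegral_congr_fun measurableSet_Ioi fun t _ => ?_
  rw [ofReal_exp, mul_right_comm, ← Complex.exp_add]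
  push_cast
  ring_nf
end

section
/- Let f : ℍ → ℂ be holomorphic with f(z) = Σ_{n≥1} c_n e^{2πinz/H} for some H > 0, with coefficients c_n of polynomial growth |c_n| ≤ C n^A. Then for every complex s, the Mellin-type integral ∫_0^∞ f(iy) y^{s-1} dy converges absolutely for Re(s) > A+1, and the function s ↦ ∫_0^∞ f(iy) y^{s-1} dy extends to an entire function of s. -/
/-!
On the imaginary axis the `q`-expansion is dominated termwise by `C (n+1)^A e^{-2π(n+1)y/H}`,
so `f(iy) = O(e^{-2πy/H})` as `y → ∞`; as `y → 0⁺` the bound `e^{-d/y}` beats every power of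
`y`. A locally integrable function with exponential decay at `∞` and faster-than-polynomial
decay at `0` has a Mellin transform that converges and is holomorphic on all of `ℂ`.
-/

open Complex MeasureTheory Real Filter Topology Asymptotics

theorem summable_add_one_rpow_mul_geometric (A : ℝ) {ρ : ℝ} (hρ₀ : 0 ≤ ρ) (hρ₁ : ρ < 1) :
    Summable fun n : ℕ => ((n : ℝ) + 1) ^ A * ρ ^ n := by
  set m := ⌈A⌉₊
  have hnat : Summable fun n : ℕ => 2 ^ m * ((n : ℝ) ^ m * ρ ^ n) :=
    (summable_pow_mul_geometric_of_norm_lt_one (R := ℝ) m (by rwa [norm_of_nonneg hρ₀])).mul_left _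
  refine hnat.of_norm_bounded_eventually_nat (eventually_atTop.2 ⟨1, fun n hn => ?_⟩)
  have hn : (1 : ℝ) ≤ n := by exact_mod_cast hn
  rw [norm_of_nonneg (by positivity), ← mul_assoc, ← mul_pow]
  gcongr
  calc ((n : ℝ) + 1) ^ A ≤ ((n : ℝ) + 1) ^ (m : ℝ) := by
        gcongr
        · linarith
        · exact Nat.le_ceil A
    _ = ((n : ℝ) + 1) ^ m := rpow_natCast _ m
    _ ≤ (2 * n) ^ m := by gcongr; linarith

theorem norm_tsum_le_mul_tsum_of_norm_le {E : Type*} [NormedAddCommGroup E] [CompleteSpace E]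
    {u : ℕ → E} {A C x ρ : ℝ} (hC : 0 ≤ C) (hx : 0 ≤ x) (hxρ : x ≤ ρ) (hρ : ρ < 1)
    (hu : ∀ n, ‖u n‖ ≤ C * ((n : ℝ) + 1) ^ A * x ^ (n + 1)) :
    ‖∑' n, u n‖ ≤ x * ∑' n : ℕ, C * ((n : ℝ) + 1) ^ A * ρ ^ n := by
  have hle : ∀ n, ‖u n‖ ≤ x * (C * ((n : ℝ) + 1) ^ A * ρ ^ n) := fun n => by
    calc ‖u n‖ ≤ C * ((n : ℝ) + 1) ^ A * x ^ (n + 1) := hu n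
      _ = x * (C * ((n : ℝ) + 1) ^ A * x ^ n) := by ring
      _ ≤ x * (C * ((n : ℝ) + 1) ^ A * ρ ^ n) := by gcongr
  have hmaj : Summable fun n : ℕ => x * (C * ((n : ℝ) + 1) ^ A * ρ ^ n) := by
    simpa only [mul_assoc] using
      ((summable_add_one_rpow_mul_geometric A (hx.trans hxρ) hρ).mul_left C).mul_left x
  have hnorm : Summable fun n => ‖u n‖ := hmaj.of_nonneg_of_le (fun n => norm_nonneg _) hle
  rw [← tsum_mul_left]
  exact (norm_tsum_le_tsum_norm hnorm).trans (hnorm.tsum_le_tsum hle hmaj)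

theorem norm_cexp_two_pi_I_mul_I (H y : ℝ) (n : ℕ) :
    ‖cexp (2 * π * I * (n + 1) * (y * I) / H)‖ = rexp (-(2 * π / H) * y) ^ (n + 1) := by
  rw [← Real.exp_nat_mul, Complex.norm_exp]
  congr 1
  have : 2 * π * I * (n + 1) * (y * I) / H = ((-(2 * π * (n + 1) * y / H) : ℝ) : ℂ) := by
    push_cast
    linear_combination (2 * (π : ℂ) * (n + 1) * y / H) * I_sq
  rw [this, ofReal_re]
  push_cast
  ring

theorem isBigO_atTop_of_qExpansion {H A C : ℝ} (hH : 0 < H) (hC : 0 ≤ C) {c : ℕ → ℂ}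
    (hc : ∀ n : ℕ, 1 ≤ n → ‖c n‖ ≤ C * (n : ℝ) ^ A) {f : ℂ → ℂ}
    (hq : ∀ z : ℂ, 0 < z.im →
      f z = ∑' n : ℕ, c (n + 1) * cexp (2 * π * I * (n + 1) * z / H)) :
    (fun y : ℝ => f (y * I)) =O[atTop] fun y => rexp (-(2 * π / H) * y) := by
  set x : ℝ → ℝ := fun y => rexp (-(2 * π / H) * y)
  have hx₁ : x 1 < 1 := by
    simp only [x, mul_one, Real.exp_lt_one_iff, Left.neg_neg_iff]
    positivity
  refine IsBigO.of_bound (∑' n : ℕ, C * ((n : ℝ) + 1) ^ A * x 1 ^ n)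
    (eventually_atTop.2 ⟨1, fun y hy => ?_⟩)
  rw [hq _ (by simpa using zero_lt_one.trans_le hy), norm_of_nonneg (exp_pos _).le,
    mul_comm _ (x y)]
  refine norm_tsum_le_mul_tsum_of_norm_le hC (exp_pos _).le ?_ hx₁ fun n => ?_
  · have : -(2 * π / H) ≤ 0 := by simp only [Left.neg_nonpos_iff]; positivity
    exact exp_le_exp.2 (mul_le_mul_of_nonpos_left hy this)
  · rw [norm_mul, norm_cexp_two_pi_I_mul_I]
    gcongr
    exact_mod_cast hc (n + 1) n.succ_pos

theorem exp_neg_div_isBigO_rpow {d : ℝ} (hd : 0 < d) (p : ℝ) :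
    (fun y : ℝ => rexp (-d / y)) =O[𝓝[>] 0] fun y => y ^ p := by
  have h := (isLittleO_exp_neg_mul_rpow_atTop hd (-p)).isBigO.comp_tendsto
    tendsto_inv_nhdsGT_zero
  refine (h.congr_left fun y => by simp [div_eq_mul_inv]).congr' .rfl ?_
  filter_upwards [self_mem_nhdsWithin] with y hy
  simp [inv_rpow (hy.le), rpow_neg (hy.le)]

theorem mellin_entire_general (H : ℝ) (hH : 0 < H) (A C : ℝ) (hC : 0 ≤ C)
    (c : ℕ → ℂ) (hc : ∀ n : ℕ, 1 ≤ n → ‖c n‖ ≤ C * (n : ℝ) ^ A)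
    (f : ℂ → ℂ) (hf : DifferentiableOn ℂ f {z : ℂ | 0 < z.im})
    (hq : ∀ z : ℂ, 0 < z.im →
      f z = ∑' n : ℕ, c (n + 1) * Complex.exp (2 * π * I * (n + 1) * z / H))
    (D d : ℝ) (hd : 0 < d)
    (hdecay0 : ∀ y : ℝ, 0 < y → y < 1 → ‖f (y * I)‖ ≤ D * Real.exp (-d / y)) :
    (∀ s : ℂ, A + 1 < s.re →
        IntegrableOn (fun y : ℝ => f (y * I) * (y : ℂ) ^ (s - 1)) (Set.Ioi 0)) ∧
    ∃ F : ℂ → ℂ, Differentiable ℂ F ∧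
      ∀ s : ℂ, A + 1 < s.re →
        F s = ∫ y in Set.Ioi (0 : ℝ), f (y * I) * (y : ℂ) ^ (s - 1) := by
  set g : ℝ → ℂ := fun y => f (y * I)
  have hloc : LocallyIntegrableOn g (Set.Ioi 0) :=
    (hf.continuousOn.comp (by fun_prop) fun y hy => by simpa using hy).locallyIntegrableOn
      measurableSet_Ioi
  have htop := isBigO_atTop_of_qExpansion hH hC hc hq
  have hbot (b : ℝ) : g =O[𝓝[>] 0] (· ^ (-b)) := by
    refine (IsBigO.of_bound D ?_).trans (exp_neg_div_isBigO_rpow hd (-b))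
    filter_upwards [Ioo_mem_nhdsGT zero_lt_one] with y hy
    rw [norm_of_nonneg (exp_pos _).le]
    exact hdecay0 y hy.1 hy.2
  have ha : 0 < 2 * π / H := by positivity
  have hintegrand (s : ℂ) :
      (fun y : ℝ => f (y * I) * (y : ℂ) ^ (s - 1)) = fun y : ℝ => (y : ℂ) ^ (s - 1) • g y :=
    funext fun y => mul_comm _ _
  refine ⟨fun s _ => ?_, mellin g, fun s => ?_, fun s _ => ?_⟩
  · rw [hintegrand]
    exact mellinConvergent_of_isBigO_rpow_exp ha hloc htop (hbot (s.re - 1)) (sub_one_lt _)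
  · exact mellin_differentiableAt_of_isBigO_rpow_exp ha hloc htop (hbot (s.re - 1)) (sub_one_lt _)
  · rw [hintegrand, mellin]

/-- Mellin transform of a cusp-form-like function: if `f` is holomorphic on ℍ with
`q`-expansion `f(z) = Σ_{n≥1} c_n e^{2πinz/H}` whose coefficients have polynomial growth
`|c_n| ≤ C n^A`, and (as for a cusp form of weight `k`) `f(iy)` decays exponentially as
`y → 0⁺`, then `∫_0^∞ f(iy) y^{s-1} dy` converges absolutely for `Re s > A + 1` and
extends to an entire function of `s`. -/
theorem mellin_entire (H : ℝ) (hH : 0 < H) (A C : ℝ) (hC : 0 ≤ C)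
    (c : ℕ → ℂ) (hc : ∀ n : ℕ, 1 ≤ n → ‖c n‖ ≤ C * (n : ℝ) ^ A)
    (f : ℂ → ℂ) (hf : DifferentiableOn ℂ f {z : ℂ | 0 < z.im})
    (hq : ∀ z : ℂ, 0 < z.im →
      f z = ∑' n : ℕ, c (n + 1) * Complex.exp (2 * π * I * (n + 1) * z / H))
    (D d : ℝ) (hD : 0 < D) (hd : 0 < d)
    (hdecay0 : ∀ y : ℝ, 0 < y → y < 1 → ‖f (y * I)‖ ≤ D * Real.exp (-d / y)) :
    (∀ s : ℂ, A + 1 < s.re →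
        IntegrableOn (fun y : ℝ => f (y * I) * (y : ℂ) ^ (s - 1)) (Set.Ioi 0)) ∧
    ∃ F : ℂ → ℂ, Differentiable ℂ F ∧
      ∀ s : ℂ, A + 1 < s.re →
        F s = ∫ y in Set.Ioi (0 : ℝ), f (y * I) * (y : ℂ) ^ (s - 1) :=
  mellin_entire_general H hH A C hC c hc f hf hq D d hd hdecay0
end

section
/- Let g : (0,∞) → ℂ be continuous with g(y) = O(y^{-C}) as y → 0⁺ for some C > 0 and g(y) = O(e^{-cy}) as y → ∞ for some c > 0. Let ξ ∈ ℝ and let β ∈ ℂ with Re(β) sufficiently large (Re(β) > C). Then ∫_0^∞ g(y(1-iξ))·y^{β-1} dy = (1-iξ)^{-β} ∫_0^∞ g(u)·u^{β-1} du, provided g extends holomorphically to the sector {re^{iθ} : r > 0, |θ| ≤ |arg(1-iξ)|} with the same decay bounds uniformly in the sector. -/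
/-!
Substituting `y = eˣ` turns both sides into integrals over `ℝ` of `F z = g (eᶻ) e^{βz}`, the left
one along the line `ℝ + log (1 - iξ)`. The exponential maps the horizontal strip between `ℝ` and
`ℝ + i arg (1 - iξ)` into the sector, so `F` is holomorphic there, and the two decay bounds on `g`
give `‖F (x + iy)‖ ≤ A e^{-b|x|}` uniformly in the strip (with `b = min (Re β - C) 1 > 0`). Cauchy's
theorem on the rectangles `[-R, R] × [0, arg (1 - iξ)]`, whose vertical sides then vanish as
`R → ∞`, moves the line of integration back to `ℝ`.
-/

open Complex MeasureTheory Real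
open Filter Set Topology

theorem integrable_exp_neg_mul_abs {b : ℝ} (hb : 0 < b) :
    Integrable fun x : ℝ => rexp (-b * |x|) := by
  rw [← integrableOn_univ, ← Iic_union_Ioi (a := (0 : ℝ)), integrableOn_union]
  refine ⟨(integrableOn_exp_mul_Iic hb 0).congr_fun (fun x hx => ?_) measurableSet_Iic,
    (exp_neg_integrableOn_Ioi 0 hb).congr_fun (fun x hx => ?_) measurableSet_Ioi⟩
  · simp [abs_of_nonpos (mem_Iic.mp hx)]
  · simp [abs_of_pos (mem_Ioi.mp hx)]

theorem tendsto_exp_neg_mul_abs {b : ℝ} (hb : 0 < b) {l : Filter ℝ}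
    (hl : Tendsto (fun x : ℝ => |x|) l atTop) :
    Tendsto (fun x : ℝ => rexp (-b * |x|)) l (𝓝 0) :=
  tendsto_exp_atBot.comp (hl.const_mul_atTop_of_neg (neg_lt_zero.mpr hb))

section StripShift

variable {f : ℂ → ℂ} {θ : ℝ}

theorem intervalIntegral_sub_intervalIntegral_add_mul_I_of_differentiableOn
    (hf : DifferentiableOn ℂ f {z : ℂ | z.im ∈ uIcc 0 θ}) (R : ℝ) :
    (∫ x in (-R)..R, f x) - (∫ x in (-R)..R, f (x + θ * I)) =
      I • (∫ y in (0 : ℝ)..θ, f (↑(-R) + y * I)) - I • ∫ y in (0 : ℝ)..θ, f (R + y * I) := by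
  have hrect := integral_boundary_rect_eq_zero_of_differentiableOn f (↑(-R)) (R + θ * I)
    (hf.mono fun z hz => by simpa using (mem_reProdIm.mp hz).2)
  simp only [ofReal_neg, neg_re, ofReal_re, neg_im, ofReal_im, neg_zero, add_re, mul_re, I_re,
    I_im, add_im, mul_im, ofReal_zero, zero_mul, add_zero, mul_zero, mul_one,
    sub_zero, zero_add] at hrect
  push_cast at hrect ⊢
  linear_combination hrect

theorem integral_add_mul_I_eq_of_differentiableOn {B : ℝ → ℝ}
    (hf : DifferentiableOn ℂ f {z : ℂ | z.im ∈ uIcc 0 θ})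
    (hfB : ∀ x y : ℝ, y ∈ uIcc 0 θ → ‖f (x + y * I)‖ ≤ B x) (hB : Integrable B)
    (hB_atTop : Tendsto B atTop (𝓝 0)) (hB_atBot : Tendsto B atBot (𝓝 0)) :
    ∫ x : ℝ, f (x + θ * I) = ∫ x : ℝ, f x := by
  have hint : ∀ y ∈ uIcc 0 θ, Integrable fun x : ℝ => f (x + y * I) := fun y hy =>
    hB.mono' (hf.continuousOn.comp_continuous (by fun_prop) fun x => by simpa using hy
      ).aestronglyMeasurable (.of_forall fun x => hfB x y hy)
  set V : ℝ → ℂ := fun t => ∫ y in (0 : ℝ)..θ, f (t + y * I)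
  have hV : ∀ t, ‖V t‖ ≤ B t * |θ| := fun t => by
    simpa using intervalIntegral.norm_integral_le_of_norm_le_const
      fun y hy => hfB t y (uIoc_subset_uIcc hy)
  have hV_atTop : Tendsto V atTop (𝓝 0) :=
    squeeze_zero_norm hV (by simpa using hB_atTop.mul_const |θ|)
  have hV_atBot : Tendsto (fun R => V (-R)) atTop (𝓝 0) :=
    squeeze_zero_norm (fun R => hV (-R))
      (by simpa using (hB_atBot.comp tendsto_neg_atTop_atBot).mul_const |θ|)
  have hlim := ((intervalIntegral_tendsto_integral (by simpa using hint 0 left_mem_uIcc)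
    tendsto_neg_atTop_atBot tendsto_id).sub (intervalIntegral_tendsto_integral
    (hint θ right_mem_uIcc) tendsto_neg_atTop_atBot tendsto_id)).congr
    (intervalIntegral_sub_intervalIntegral_add_mul_I_of_differentiableOn hf)
  have := tendsto_nhds_unique hlim
    (by simpa [V] using (hV_atBot.const_smul I).sub (hV_atTop.const_smul I))
  exact (sub_eq_zero.mp this).symm

theorem integral_add_eq_of_differentiableOn {B : ℝ → ℝ} {ζ : ℂ}
    (hf : DifferentiableOn ℂ f {z : ℂ | z.im ∈ uIcc 0 ζ.im})
    (hfB : ∀ x y : ℝ, y ∈ uIcc 0 ζ.im → ‖f (x + y * I)‖ ≤ B x) (hB : Integrable B)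
    (hB_atTop : Tendsto B atTop (𝓝 0)) (hB_atBot : Tendsto B atBot (𝓝 0)) :
    ∫ x : ℝ, f (x + ζ) = ∫ x : ℝ, f x := by
  rw [← integral_add_mul_I_eq_of_differentiableOn hf hfB hB hB_atTop hB_atBot,
    ← integral_add_right_eq_self (fun x : ℝ => f (x + ζ.im * I)) ζ.re]
  congr with x
  congr 1
  apply Complex.ext <;> simp

theorem integral_add_eq_of_norm_le_exp_neg_mul_abs {A b : ℝ} {ζ : ℂ} (hb : 0 < b)
    (hf : DifferentiableOn ℂ f {z : ℂ | z.im ∈ uIcc 0 ζ.im})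
    (hfB : ∀ x y : ℝ, y ∈ uIcc 0 ζ.im → ‖f (x + y * I)‖ ≤ A * rexp (-b * |x|)) :
    ∫ x : ℝ, f (x + ζ) = ∫ x : ℝ, f x := by
  have hB {l : Filter ℝ} (hl : Tendsto (fun x : ℝ => |x|) l atTop) :
      Tendsto (fun x : ℝ => A * rexp (-b * |x|)) l (𝓝 0) := by
    simpa using (tendsto_exp_neg_mul_abs hb hl).const_mul A
  exact integral_add_eq_of_differentiableOn hf hfB ((integrable_exp_neg_mul_abs hb).const_mul A)
    (hB tendsto_abs_atTop_atTop) (hB tendsto_abs_atBot_atTop)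

end StripShift

theorem mul_exp_le_exp_neg_mul_abs {C r c K φ x : ℝ} (hc : 0 < c) (hK : 0 ≤ K)
    (h0 : x ≤ 0 → φ ≤ K * rexp (-C * x)) (h1 : 0 ≤ x → φ ≤ K * rexp (-c * rexp x)) :
    φ * rexp (r * x) ≤ K * rexp ((r + 1) ^ 2 / (2 * c)) * rexp (-min (r - C) 1 * |x|) := by
  rw [mul_assoc, ← Real.exp_add]
  rcases le_total x 0 with hx | hx
  · refine (mul_le_mul_of_nonneg_right (h0 hx) (exp_pos _).le).trans ?_
    rw [mul_assoc, ← Real.exp_add]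
    refine mul_le_mul_of_nonneg_left (exp_le_exp.mpr ?_) hK
    have hD : 0 ≤ (r + 1) ^ 2 / (2 * c) := by positivity
    rw [abs_of_nonpos hx]
    nlinarith [min_le_left (r - C) 1]
  · refine (mul_le_mul_of_nonneg_right (h1 hx) (exp_pos _).le).trans ?_
    rw [mul_assoc, ← Real.exp_add]
    refine mul_le_mul_of_nonneg_left (exp_le_exp.mpr ?_) hK
    -- the constant comes from `c eˣ ≥ c x² / 2` and completing the square
    have hsq : (r + 1) * x ≤ c * (x ^ 2 / 2) + (r + 1) ^ 2 / (2 * c) := by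
      have : c * (x ^ 2 / 2) + (r + 1) ^ 2 / (2 * c) - (r + 1) * x =
          (c * x - (r + 1)) ^ 2 / (2 * c) := by
        field_simp
        ring
      linarith [show 0 ≤ (c * x - (r + 1)) ^ 2 / (2 * c) by positivity]
    have hexp : c * (x ^ 2 / 2) ≤ c * rexp x := by
      have := quadratic_le_exp_of_nonneg hx
      gcongr
      linarith
    rw [abs_of_nonneg hx]
    nlinarith [min_le_right (r - C) 1]

theorem integral_Ioi_mul_cpow_eq_integral_cexp (h : ℝ → ℂ) (β : ℂ) :
    ∫ y in Ioi (0 : ℝ), h y * (y : ℂ) ^ (β - 1) = ∫ x : ℝ, h (rexp x) * cexp (β * x) := by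
  rw [← Real.range_exp, ← image_univ,
    integral_image_eq_integral_abs_deriv_smul MeasurableSet.univ
      (fun x _ => (Real.hasDerivAt_exp x).hasDerivWithinAt) Real.exp_injective.injOn,
    setIntegral_univ]
  congr with x
  have hpow : (rexp x : ℂ) ^ (β - 1) = cexp ((β - 1) * x) := by
    rw [ofReal_exp, cpow_def_of_ne_zero (Complex.exp_ne_zero _),
      Complex.log_exp (by simp [Real.pi_pos]) (by simp [Real.pi_pos.le]), mul_comm]
  rw [abs_of_pos (exp_pos x), hpow, real_smul, ofReal_exp, mul_left_comm, ← Complex.exp_add]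
  ring_nf

theorem abs_arg_exp_le {θ : ℝ} (hθ : |θ| < π) {z : ℂ} (hz : z.im ∈ uIcc 0 θ) :
    |arg (cexp z)| ≤ |θ| := by
  have hzθ : |z.im| ≤ |θ| := by simpa using abs_sub_left_of_mem_uIcc hz
  rw [arg_exp, (toIocMod_eq_self _).mpr]
  · exact hzθ
  · have := abs_lt.mp (hzθ.trans_lt hθ)
    constructor <;> linarith

theorem norm_comp_cexp_mul_cexp_le {g : ℂ → ℂ} {β : ℂ} {C c K θ : ℝ} (hc : 0 < c)
    (hθ : |θ| < π)
    (hbound0 : ∀ z : ℂ, z ≠ 0 → |arg z| ≤ |θ| → ‖z‖ ≤ 1 → ‖g z‖ ≤ K * ‖z‖ ^ (-C))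
    (hboundInf : ∀ z : ℂ, z ≠ 0 → |arg z| ≤ |θ| → 1 ≤ ‖z‖ → ‖g z‖ ≤ K * rexp (-c * ‖z‖))
    {x y : ℝ} (hy : y ∈ uIcc 0 θ) :
    ‖g (cexp (x + y * I)) * cexp (β * (x + y * I))‖ ≤
      rexp (|β.im| * |θ|) * K * rexp ((β.re + 1) ^ 2 / (2 * c)) *
        rexp (-min (β.re - C) 1 * |x|) := by
  have hK : 0 ≤ K := (norm_nonneg _).trans (by simpa using hbound0 1 one_ne_zero (by simp))
  have harg : |arg (cexp (x + y * I))| ≤ |θ| := abs_arg_exp_le hθ (by simpa using hy)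
  have hnorm : ‖cexp (x + y * I)‖ = rexp x := by simp [norm_exp]
  have hexp : ‖cexp (β * (x + y * I))‖ ≤ rexp (|β.im| * |θ|) * rexp (β.re * x) := by
    rw [norm_exp, ← Real.exp_add]
    refine exp_le_exp.mpr ?_
    have hyθ : |y| ≤ |θ| := by simpa using abs_sub_left_of_mem_uIcc hy
    have : -(β.im * y) ≤ |β.im| * |θ| := (neg_le_abs _).trans (by rw [abs_mul]; gcongr)
    simp only [mul_re, add_re, ofReal_re, mul_im, I_re, I_im, ofReal_im, add_im]
    linarith
  rw [norm_mul]
  calc _ ≤ ‖g (cexp (x + y * I))‖ * (rexp (|β.im| * |θ|) * rexp (β.re * x)) := by gcongr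
    _ = rexp (|β.im| * |θ|) * (‖g (cexp (x + y * I))‖ * rexp (β.re * x)) := by ring
    _ ≤ rexp (|β.im| * |θ|) *
        (K * rexp ((β.re + 1) ^ 2 / (2 * c)) * rexp (-min (β.re - C) 1 * |x|)) := by
      refine mul_le_mul_of_nonneg_left (mul_exp_le_exp_neg_mul_abs hc hK (fun hx => ?_)
        (fun hx => ?_)) (exp_pos _).le
      · have := hbound0 _ (Complex.exp_ne_zero _) harg (by rw [hnorm]; exact exp_le_one_iff.mpr hx)
        rwa [hnorm, ← Real.exp_mul, mul_comm x] at this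
      · have := hboundInf _ (Complex.exp_ne_zero _) harg (by rw [hnorm]; exact one_le_exp hx)
        rwa [hnorm] at this
    _ = _ := by ring

theorem contour_rotation_general (g : ℂ → ℂ) (ξ : ℝ) (C c K : ℝ) (hc : 0 < c)
    (β : ℂ) (hβ : C < β.re)
    (hg : DifferentiableOn ℂ g
      {z : ℂ | z ≠ 0 ∧ |Complex.arg z| ≤ |Complex.arg (1 - I * ξ)|})
    (hbound0 : ∀ z : ℂ, z ≠ 0 → |Complex.arg z| ≤ |Complex.arg (1 - I * ξ)| →
      ‖z‖ ≤ 1 → ‖g z‖ ≤ K * ‖z‖ ^ (-C))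
    (hboundInf : ∀ z : ℂ, z ≠ 0 → |Complex.arg z| ≤ |Complex.arg (1 - I * ξ)| →
      1 ≤ ‖z‖ → ‖g z‖ ≤ K * Real.exp (-c * ‖z‖)) :
    ∫ y in Set.Ioi (0 : ℝ), g ((y : ℂ) * (1 - I * ξ)) * (y : ℂ) ^ (β - 1)
      = (1 - I * ξ) ^ (-β) * ∫ u in Set.Ioi (0 : ℝ), g (u : ℂ) * (u : ℂ) ^ (β - 1) := by
  set w : ℂ := 1 - I * ξ
  have hw : w ≠ 0 := fun h => by simpa [w] using congrArg re h
  have hθ : |arg w| < π :=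
    (abs_arg_lt_pi_div_two_iff.mpr (Or.inl (by simp [w]))).trans (by linarith [pi_pos])
  have hb : 0 < min (β.re - C) 1 := lt_min (by linarith) one_pos
  set F : ℂ → ℂ := fun z => g (cexp z) * cexp (β * z)
  have hF : DifferentiableOn ℂ F {z : ℂ | z.im ∈ uIcc 0 (log w).im} := by
    rw [log_im]
    exact (hg.comp differentiable_exp.differentiableOn
      fun z hz => ⟨Complex.exp_ne_zero z, abs_arg_exp_le hθ hz⟩).mul (by fun_prop)
  have hshift : ∫ x : ℝ, F (x + log w) = ∫ x : ℝ, F x :=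
    integral_add_eq_of_norm_le_exp_neg_mul_abs hb hF
      (fun x y hy => norm_comp_cexp_mul_cexp_le hc hθ hbound0 hboundInf (by rwa [log_im] at hy))
  calc _ = ∫ x : ℝ, g (rexp x * w) * cexp (β * x) :=
        integral_Ioi_mul_cpow_eq_integral_cexp (fun y => g (y * w)) β
    _ = ∫ x : ℝ, w ^ (-β) * F (x + log w) := by
        congr with x
        have : cexp (log w * -β) * cexp (β * (x + log w)) = cexp (β * x) := by
          rw [← Complex.exp_add]
          ring_nf
        rw [cpow_def_of_ne_zero hw, ← this]
        simp only [F, Complex.exp_add, exp_log hw, ofReal_exp]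
        ring
    _ = _ := by
        rw [integral_const_mul, hshift, integral_Ioi_mul_cpow_eq_integral_cexp]
        simp only [F, ofReal_exp]

/-- Contour rotation: if `g` is holomorphic on the sector
`{z ≠ 0 : |arg z| ≤ |arg(1-iξ)|}` with uniform bounds `‖g(z)‖ ≤ K|z|^{-C}` for `|z| ≤ 1`
and `‖g(z)‖ ≤ K e^{-c|z|}` for `|z| ≥ 1`, then for `Re β > C`,
`∫_0^∞ g(y(1-iξ)) y^{β-1} dy = (1-iξ)^{-β} ∫_0^∞ g(u) u^{β-1} du`. -/
theorem contour_rotation (g : ℂ → ℂ) (ξ : ℝ) (C c K : ℝ) (hC : 0 < C) (hc : 0 < c)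
    (hK : 0 < K) (β : ℂ) (hβ : C < β.re)
    (hg : DifferentiableOn ℂ g
      {z : ℂ | z ≠ 0 ∧ |Complex.arg z| ≤ |Complex.arg (1 - I * ξ)|})
    (hbound0 : ∀ z : ℂ, z ≠ 0 → |Complex.arg z| ≤ |Complex.arg (1 - I * ξ)| →
      ‖z‖ ≤ 1 → ‖g z‖ ≤ K * ‖z‖ ^ (-C))
    (hboundInf : ∀ z : ℂ, z ≠ 0 → |Complex.arg z| ≤ |Complex.arg (1 - I * ξ)| →
      1 ≤ ‖z‖ → ‖g z‖ ≤ K * Real.exp (-c * ‖z‖)) :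
    ∫ y in Set.Ioi (0 : ℝ), g ((y : ℂ) * (1 - I * ξ)) * (y : ℂ) ^ (β - 1)
      = (1 - I * ξ) ^ (-β) * ∫ u in Set.Ioi (0 : ℝ), g (u : ℂ) * (u : ℂ) ^ (β - 1) :=
  contour_rotation_general g ξ C c K hc β hβ hg hbound0 hboundInf
end
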